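/- Fix a real parameter α and set β = α and γ = −α in the Chen system. Let H(x,y,z) = x²/2 − αz and let J(x,y,z) be the skew-symmetric matrix with J₁₂ = −γ + z, J₁₃ = −y, J₂₃ = x (with γ = −α). Then: (i) the Poisson vector (−x, −y, γ − z) associated to J has vanishing curl, hence satisfies the Jacobi identity; (ii) the Hamiltonian vector field X_H = J∇H has divergence zero everywhere; and (iii) for every (x,y,z) ∈ ℝ³, the right-hand side of the Chen system with β = α, γ = −α, namely (αy − αx, −2αx − αy − xz, xy − αz), equals J∇H − α·(x,y,z), i.e. the Chen system is the conformal Hamiltonian vector field X_H^{−α} = X_H + aΓ with a = −α and Γ the Euler vector field. -/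

import Mathlib

set_option linter.unusedVariables false

open Matrix

/-- Partial derivative with respect to the first variable. -/
noncomputable def pd1 (f : ℝ → ℝ → ℝ → ℝ) (x y z : ℝ) : ℝ := deriv (fun t => f t y z) x
/-- Partial derivative with respect to the second variable. -/
noncomputable def pd2 (f : ℝ → ℝ → ℝ → ℝ) (x y z : ℝ) : ℝ := deriv (fun t => f x t z) y
/-- Partial derivative with respect to the third variable. -/
noncomputable def pd3 (f : ℝ → ℝ → ℝ → ℝ) (x y z : ℝ) : ℝ := deriv (fun t => f x y t) z

/-- Hamiltonian of the Chen system. -/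
noncomputable def H (α : ℝ) (x y z : ℝ) : ℝ := x ^ 2 / 2 - α * z

/-- Gradient of `H`. -/
noncomputable def gradH (α : ℝ) (x y z : ℝ) : Fin 3 → ℝ :=
  ![pd1 (H α) x y z, pd2 (H α) x y z, pd3 (H α) x y z]

/-- Poisson matrix for the conformal-Hamiltonian description of the Chen system. -/
noncomputable def Jmat (γ : ℝ) (x y z : ℝ) : Matrix (Fin 3) (Fin 3) ℝ :=
  !![0, -γ + z, -y; γ - z, 0, x; y, -x, 0]

/-- The Hamiltonian vector field `X_H = J∇H`. -/
noncomputable def XH (α γ : ℝ) (x y z : ℝ) : Fin 3 → ℝ :=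
  (Jmat γ x y z).mulVec (gradH α x y z)

lemma gradH_eq (α x y z : ℝ) : gradH α x y z = ![x, 0, -α] := by
  unfold gradH pd1 pd2 pd3 H
  ext i
  fin_cases i
  · have : deriv (fun t : ℝ => t ^ 2 / 2 - α * z) x = x := by
      rw [deriv_fun_sub (by fun_prop) (by fun_prop)]
      simp [deriv_div_const]
    simpa using this
  · simp
  · have : deriv (fun t : ℝ => x ^ 2 / 2 - α * t) z = -α := by
      rw [deriv_fun_sub (by fun_prop) (by fun_prop), deriv_const_mul _ differentiableAt_fun_id]
      simp
    simpa using this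

lemma XH_eq (α γ x y z : ℝ) : XH α γ x y z = ![α * y, (γ - z) * x - x * α, y * x] := by
  unfold XH Jmat
  rw [gradH_eq]
  ext i
  fin_cases i <;> simp [mulVec, dotProduct, Fin.sum_univ_three] <;> ring

/-- For the Chen system with `β = α` and `γ = −α`: (i) the Poisson vector
`(−x, −y, γ − z)` associated to `J` has vanishing curl (hence satisfies the Jacobi
identity); (ii) `X_H = J∇H` is divergence-free; (iii) the Chen system equals the
conformal Hamiltonian vector field `X_H^{−α} = X_H − αΓ`, where `Γ` is the Euler
vector field. -/
theorem stmt_19 (α β γ : ℝ) (hβ : β = α) (hγ : γ = -α) :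
    (∀ x y z : ℝ,
      (pd2 (fun x y z => γ - z) x y z - pd3 (fun x y z => -y) x y z,
       pd3 (fun x y z => -x) x y z - pd1 (fun x y z => γ - z) x y z,
       pd1 (fun x y z => -y) x y z - pd2 (fun x y z => -x) x y z)
        = ((0 : ℝ), (0 : ℝ), (0 : ℝ))) ∧
    (∀ x y z : ℝ,
      pd1 (fun x y z => XH α γ x y z 0) x y z + pd2 (fun x y z => XH α γ x y z 1) x y z
        + pd3 (fun x y z => XH α γ x y z 2) x y z = 0) ∧
    (∀ x y z : ℝ,
      ![α * y - α * x, -2 * α * x - α * y - x * z, x * y - α * z]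
        = XH α γ x y z + (-α : ℝ) • ![x, y, z]) := by
  refine ⟨fun x y z => ?_, fun x y z => ?_, fun x y z => ?_⟩
  · simp [pd1, pd2, pd3]
  · simp only [XH_eq]
    simp [pd1, pd2, pd3, deriv_sub, deriv_const_mul, mul_comm]
  · rw [XH_eq]
    subst hγ
    ext i
    fin_cases i <;> simp <;> ring
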